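/- Let μ = f·Leb be a Borel probability measure on ℝ^D with f ∈ L¹(ℝ^D), f ≥ 0, and compact support K. Let S ⊆ ℝ^D be a compact set with K ⊆ S, and set M(S,K) = diam(S)·(diam(S) + 2·diam(K)). Then for every β > 0 and all x, x′ ∈ S, the smoothed density satisfies f_β(x) ≤ e^{M(S,K)/(2β)}·f_β(x′); consequently the density regularity obeys 𝔯_S(μ_β) ≤ e^{M(S,K)/(2β)}, which tends to 1 as β → ∞. -/

import Mathlib

/-!
For `y` in the support of `f` and `x' ∈ S`, the ratio of Gaussian kernels is
`G(x - y) / G(x' - y) = exp ((‖x' - y‖² - ‖x - y‖²) / (2β)) ≤ exp (diam S ² / (2β))`,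
and `diam S ² ≤ M`. Integrating this pointwise bound against `f ≥ 0` compares `f_β(x)` with
`f_β(x')`; a two-sided pointwise comparison on `S` bounds the essential supremum by `e^{M/(2β)}`
times the essential infimum.
-/

open MeasureTheory Metric Set Filter
open scoped ENNReal NNReal

noncomputable section

/-- The Euclidean space `ℝ^D`. -/
abbrev Euc (D : ℕ) := EuclideanSpace ℝ (Fin D)

/-- The centered Gaussian kernel of variance `β` on `ℝ^D`. -/
noncomputable def gaussKer (D : ℕ) (β : ℝ) (z : Euc D) : ℝ :=
  (2 * Real.pi * β) ^ (-(D : ℝ) / 2) * Real.exp (-‖z‖ ^ 2 / (2 * β))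

/-- Density regularity of a density on a set `S`: essential supremum over essential
infimum w.r.t. Lebesgue measure restricted to `S`. -/
noncomputable def densReg {D : ℕ} (f : Euc D → ℝ≥0∞) (S : Set (Euc D)) : ℝ≥0∞ :=
  essSup f (volume.restrict S) / essInf f (volume.restrict S)

namespace GaussKer

variable {D : ℕ} {β : ℝ}

lemma nonneg (hβ : 0 ≤ β) (z : Euc D) : 0 ≤ gaussKer D β z := by
  unfold gaussKer
  have := Real.rpow_nonneg (by positivity : 0 ≤ 2 * Real.pi * β) (-(D : ℝ) / 2)
  positivity

lemma le_normalization (hβ : 0 ≤ β) (z : Euc D) :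
    gaussKer D β z ≤ (2 * Real.pi * β) ^ (-(D : ℝ) / 2) := by
  have hexp : Real.exp (-‖z‖ ^ 2 / (2 * β)) ≤ 1 :=
    Real.exp_le_one_iff.2 (div_nonpos_of_nonpos_of_nonneg (by nlinarith [sq_nonneg ‖z‖])
      (by positivity))
  exact mul_le_of_le_one_right (Real.rpow_nonneg (by positivity) _) hexp

lemma continuous (D : ℕ) (β : ℝ) : Continuous (gaussKer D β) := by
  unfold gaussKer
  fun_prop

lemma le_exp_mul_of_sq_norm_sub_le (hβ : 0 < β) {z z' : Euc D} {M : ℝ}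
    (h : ‖z'‖ ^ 2 - ‖z‖ ^ 2 ≤ M) :
    gaussKer D β z ≤ Real.exp (M / (2 * β)) * gaussKer D β z' := by
  unfold gaussKer
  rw [mul_left_comm, ← Real.exp_add]
  gcongr
  rw [← add_div]
  exact div_le_div_of_nonneg_right (by linarith) (by positivity)

lemma sub_le_exp_diam_sq_mul {S : Set (Euc D)} (hβ : 0 < β) (hS : Bornology.IsBounded S)
    (x : Euc D) {x' y : Euc D} (hx' : x' ∈ S) (hy : y ∈ S) :
    gaussKer D β (x - y) ≤ Real.exp (diam S ^ 2 / (2 * β)) * gaussKer D β (x' - y) := by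
  refine le_exp_mul_of_sq_norm_sub_le hβ ?_
  have hdist : ‖x' - y‖ ≤ diam S := by
    rw [← dist_eq_norm]
    exact dist_le_diam_of_mem hS hx' hy
  nlinarith [norm_nonneg (x' - y), sq_nonneg ‖x - y‖]

end GaussKer

lemma MeasureTheory.Integrable.mul_gaussKer_sub {D : ℕ} {β : ℝ} {f : Euc D → ℝ}
    (hf : Integrable f volume) (hβ : 0 ≤ β) (x : Euc D) :
    Integrable (fun y => f y * gaussKer D β (x - y)) volume :=
  hf.mul_bdd
    ((GaussKer.continuous D β).comp (continuous_const.sub continuous_id)).aestronglyMeasurable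
    (ae_of_all _ fun y => by
      rw [Real.norm_eq_abs, abs_of_nonneg (GaussKer.nonneg hβ _)]
      exact GaussKer.le_normalization hβ _)

lemma integral_mul_gaussKer_sub_le_exp_diam_sq_mul {D : ℕ} {β : ℝ} {f : Euc D → ℝ}
    {S : Set (Euc D)} (hf : Integrable f volume) (hf0 : 0 ≤ f) (hfS : Function.support f ⊆ S)
    (hS : Bornology.IsBounded S) (hβ : 0 < β) (x : Euc D) {x' : Euc D} (hx' : x' ∈ S) :
    ∫ y, f y * gaussKer D β (x - y) ≤
      Real.exp (diam S ^ 2 / (2 * β)) * ∫ y, f y * gaussKer D β (x' - y) := by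
  rw [← integral_const_mul]
  refine integral_mono (hf.mul_gaussKer_sub hβ.le x)
    ((hf.mul_gaussKer_sub hβ.le x').const_mul _) fun y => ?_
  by_cases hy : f y = 0
  · simp [hy]
  calc f y * gaussKer D β (x - y)
      ≤ f y * (Real.exp (diam S ^ 2 / (2 * β)) * gaussKer D β (x' - y)) :=
        mul_le_mul_of_nonneg_left (GaussKer.sub_le_exp_diam_sq_mul hβ hS x hx' (hfS hy)) (hf0 y)
    _ = _ := by ring

lemma essSup_div_essInf_le {α : Type*} [MeasurableSpace α] {μ : Measure α} {g : α → ℝ≥0∞}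
    {c : ℝ≥0∞} (hc0 : c ≠ 0) (hctop : c ≠ ∞) (h : ∀ᵐ x' ∂μ, ∀ᵐ x ∂μ, g x ≤ c * g x') :
    essSup g μ / essInf g μ ≤ c := by
  have hsup : ∀ᵐ x' ∂μ, essSup g μ ≤ c * g x' :=
    h.mono fun _ hx' => essSup_le_of_ae_le _ hx'
  have hinf : essSup g μ / c ≤ essInf g μ :=
    le_essInf_of_ae_le _ (hsup.mono fun _ hx' => ENNReal.div_le_of_le_mul' hx')
  exact ENNReal.div_le_of_le_mul'
    ((ENNReal.div_le_iff_le_mul (Or.inl hc0) (Or.inl hctop)).1 hinf)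

lemma densReg_ofReal_le {D : ℕ} {g : Euc D → ℝ} {S : Set (Euc D)} (hS : MeasurableSet S)
    {c : ℝ} (hc : 0 < c) (h : ∀ x ∈ S, ∀ x' ∈ S, g x ≤ c * g x') :
    densReg (fun x => ENNReal.ofReal (g x)) S ≤ ENNReal.ofReal c := by
  refine essSup_div_essInf_le (by simpa using hc) ENNReal.ofReal_ne_top ?_
  filter_upwards [ae_restrict_mem hS] with x' hx'
  filter_upwards [ae_restrict_mem hS] with x hx
  rw [← ENNReal.ofReal_mul hc.le]
  exact ENNReal.ofReal_le_ofReal (h x hx x' hx')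

lemma tendsto_exp_div_two_mul_atTop (M : ℝ) :
    Tendsto (fun b : ℝ => Real.exp (M / (2 * b))) atTop (nhds 1) := by
  have h : Tendsto (fun b : ℝ => M / (2 * b)) atTop (nhds 0) :=
    tendsto_const_nhds.div_atTop (tendsto_id.const_mul_atTop two_pos)
  simpa [Function.comp_def] using (Real.continuous_exp.tendsto 0).comp h

theorem density_regularity_decay_under_gaussian_smoothing_general
    (D : ℕ) (f : Euc D → ℝ)
    (hint : Integrable f volume) (hnn : 0 ≤ f)
    (K : Set (Euc D)) (hK : K = tsupport f)
    (S : Set (Euc D)) (hScpt : IsCompact S) (hKS : K ⊆ S)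
    (M : ℝ) (hM : M = diam S * (diam S + 2 * diam K))
    (β : ℝ) (hβ : 0 < β)
    (fβ : Euc D → ℝ) (hfβ : fβ = fun x => ∫ y, f y * gaussKer D β (x - y)) :
    (∀ x ∈ S, ∀ x' ∈ S, fβ x ≤ Real.exp (M / (2 * β)) * fβ x') ∧
    densReg (fun x => ENNReal.ofReal (fβ x)) S ≤ ENNReal.ofReal (Real.exp (M / (2 * β))) ∧
    Tendsto (fun b : ℝ => Real.exp (M / (2 * b))) atTop (nhds 1) := by
  have hsupp : Function.support f ⊆ S := (subset_tsupport f).trans (hK ▸ hKS)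
  have hdiam : diam S ^ 2 ≤ M := by
    rw [hM, sq]
    have := mul_nonneg (diam_nonneg (s := S)) (diam_nonneg (s := K))
    nlinarith
  have hcompare : ∀ x ∈ S, ∀ x' ∈ S, fβ x ≤ Real.exp (M / (2 * β)) * fβ x' := by
    intro x _ x' hx'
    subst hfβ
    refine (integral_mul_gaussKer_sub_le_exp_diam_sq_mul hint hnn hsupp hScpt.isBounded hβ x
      hx').trans (mul_le_mul_of_nonneg_right ?_ (integral_nonneg fun y => ?_))
    · gcongr
    · exact mul_nonneg (hnn y) (GaussKer.nonneg hβ.le _)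
  exact ⟨hcompare,
    densReg_ofReal_le hScpt.isClosed.measurableSet (Real.exp_pos _) hcompare,
    tendsto_exp_div_two_mul_atTop M⟩

/-- let `μ = f·Leb` be a probability measure with compact support `K`,
let `S ⊇ K` be compact, and `M(S,K) = diam S · (diam S + 2 diam K)`. Then for `β > 0`
the Gaussian-smoothed density satisfies `f_β(x) ≤ e^{M/(2β)} f_β(x')` for all
`x, x' ∈ S`; consequently `𝔯_S(μ_β) ≤ e^{M/(2β)}`, which tends to `1` as `β → ∞`. -/
theorem density_regularity_decay_under_gaussian_smoothing
    (D : ℕ) (f : Euc D → ℝ)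
    (hint : Integrable f volume) (hnn : 0 ≤ f) (hcpt : HasCompactSupport f)
    (hprob : IsProbabilityMeasure (volume.withDensity fun x => ENNReal.ofReal (f x)))
    (K : Set (Euc D)) (hK : K = tsupport f)
    (S : Set (Euc D)) (hScpt : IsCompact S) (hKS : K ⊆ S)
    (M : ℝ) (hM : M = diam S * (diam S + 2 * diam K))
    (β : ℝ) (hβ : 0 < β)
    (fβ : Euc D → ℝ) (hfβ : fβ = fun x => ∫ y, f y * gaussKer D β (x - y)) :
    (∀ x ∈ S, ∀ x' ∈ S, fβ x ≤ Real.exp (M / (2 * β)) * fβ x') ∧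
    densReg (fun x => ENNReal.ofReal (fβ x)) S ≤ ENNReal.ofReal (Real.exp (M / (2 * β))) ∧
    Tendsto (fun b : ℝ => Real.exp (M / (2 * b))) atTop (nhds 1) :=
  density_regularity_decay_under_gaussian_smoothing_general D f hint hnn K hK S hScpt hKS M hM β hβ
    fβ hfβ
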